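/- arXiv:1807.07635 — 3 statements merged into one kernel-verified Lean document; each statement's English description precedes it below -/
import Mathlib

section
/- Let φ : [−1,1] → ℝ be a non-constant, non-positive, convex, differentiable function. Then for every ρ₀ ∈ (−1,1), 2φ(ρ₀) < −(1 − ρ₀²)·|φ'(ρ₀)|. -/
/-!
Both endpoints lie above the tangent line at `ρ₀`, and `φ(±1) ≤ 0`, so
`φ(ρ₀) + (1 - ρ₀) φ'(ρ₀) ≤ 0` and `φ(ρ₀) - (1 + ρ₀) φ'(ρ₀) ≤ 0`. Multiplying the one matching the
sign of `φ'(ρ₀)` by `1 ± ρ₀` and adding `(1 ∓ ρ₀) φ(ρ₀)` gives the bound, strict because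
`φ(ρ₀) < 0`: were `φ(ρ₀) = 0`, the same two inequalities would force a horizontal tangent at height
`0`, and then `0 ≤ φ ≤ 0` on the whole interval.
-/

open Set

namespace ConvexOn

variable {S : Set ℝ} {f : ℝ → ℝ} {f' a b x : ℝ}

theorem add_mul_sub_le_of_hasDerivAt (hf : ConvexOn ℝ S f) (hx : x ∈ S) {y : ℝ} (hy : y ∈ S)
    (hd : HasDerivAt f f' x) : f x + f' * (y - x) ≤ f y := by
  rcases lt_trichotomy x y with hxy | rfl | hyx
  · have := hf.le_slope_of_hasDerivAt hx hy hxy hd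
    rw [slope_def_field, le_div_iff₀ (sub_pos.mpr hxy)] at this
    linarith
  · simp
  · have := hf.slope_le_of_hasDerivAt hy hx hyx hd
    rw [slope_def_field, div_le_iff₀ (sub_pos.mpr hyx)] at this
    linarith

theorem eq_zero_of_nonpos_of_eq_zero (hf : ConvexOn ℝ (Icc a b) f)
    (hnonpos : ∀ y ∈ Icc a b, f y ≤ 0) (hx : x ∈ Ioo a b) (hd : HasDerivAt f f' x)
    (hfx : f x = 0) : ∀ y ∈ Icc a b, f y = 0 := by
  have hxI : x ∈ Icc a b := Ioo_subset_Icc_self hx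
  have hab : a ≤ b := hx.1.le.trans hx.2.le
  have tangent (y : ℝ) (hy : y ∈ Icc a b) : f' * (y - x) ≤ f y := by
    simpa [hfx] using hf.add_mul_sub_le_of_hasDerivAt hxI hy hd
  have hright := (tangent b (right_mem_Icc.mpr hab)).trans (hnonpos b (right_mem_Icc.mpr hab))
  have hleft := (tangent a (left_mem_Icc.mpr hab)).trans (hnonpos a (left_mem_Icc.mpr hab))
  have hf'0 : f' = 0 := by
    apply le_antisymm <;> nlinarith [hx.1, hx.2]
  intro y hy
  exact le_antisymm (hnonpos y hy) (by simpa [hf'0] using tangent y hy)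

theorem neg_of_nonpos_of_exists_ne (hf : ConvexOn ℝ (Icc a b) f)
    (hnonpos : ∀ y ∈ Icc a b, f y ≤ 0) (hnonconst : ∃ y ∈ Icc a b, ∃ z ∈ Icc a b, f y ≠ f z)
    (hx : x ∈ Ioo a b) (hd : HasDerivAt f f' x) : f x < 0 := by
  refine (hnonpos x (Ioo_subset_Icc_self hx)).lt_of_ne fun hfx ↦ ?_
  obtain ⟨y, hy, z, hz, hyz⟩ := hnonconst
  have hzero := hf.eq_zero_of_nonpos_of_eq_zero hnonpos hx hd hfx
  exact hyz (by rw [hzero y hy, hzero z hz])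

end ConvexOn

/-- For a non-constant, non-positive, convex, differentiable function `φ` on `[-1,1]`,
`2φ(ρ₀) < -(1-ρ₀²)·|φ'(ρ₀)|` for every interior point `ρ₀`. -/
theorem convex_nonpositive_strict_bound
    (φ φ' : ℝ → ℝ)
    (hconv : ConvexOn ℝ (Icc (-1 : ℝ) 1) φ)
    (hnonpos : ∀ ρ ∈ Icc (-1 : ℝ) 1, φ ρ ≤ 0)
    (hderiv : ∀ ρ ∈ Ioo (-1 : ℝ) 1, HasDerivAt φ (φ' ρ) ρ)
    (hnonconst : ∃ x ∈ Icc (-1 : ℝ) 1, ∃ y ∈ Icc (-1 : ℝ) 1, φ x ≠ φ y) :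
    ∀ ρ₀ ∈ Ioo (-1 : ℝ) 1, 2 * φ ρ₀ < -((1 - ρ₀ ^ 2) * |φ' ρ₀|) := by
  intro ρ₀ hρ₀
  have hρ₀I : ρ₀ ∈ Icc (-1 : ℝ) 1 := Ioo_subset_Icc_self hρ₀
  have hd := hderiv ρ₀ hρ₀
  have hright : φ ρ₀ + φ' ρ₀ * (1 - ρ₀) ≤ 0 :=
    (hconv.add_mul_sub_le_of_hasDerivAt hρ₀I (by norm_num) hd).trans (hnonpos 1 (by norm_num))
  have hleft : φ ρ₀ + φ' ρ₀ * (-1 - ρ₀) ≤ 0 :=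
    (hconv.add_mul_sub_le_of_hasDerivAt hρ₀I (by norm_num) hd).trans (hnonpos (-1) (by norm_num))
  have hneg : φ ρ₀ < 0 := hconv.neg_of_nonpos_of_exists_ne hnonpos hnonconst hρ₀ hd
  obtain ⟨h1, h2⟩ := hρ₀
  rcases abs_cases (φ' ρ₀) with ⟨habs, -⟩ | ⟨habs, -⟩ <;> rw [habs]
  · nlinarith [mul_le_mul_of_nonneg_left hright (by linarith : (0 : ℝ) ≤ 1 + ρ₀)]
  · nlinarith [mul_le_mul_of_nonneg_left hleft (by linarith : (0 : ℝ) ≤ 1 - ρ₀)]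
end

section
/- Let γ ∈ (0,1], q, H, L, R > 0 and r₀ > 0. Let p₀ : (0,∞) → (0,∞) satisfy |log(p₀(s₁)/p₀(s₂))| ≤ q·γ + H·R·γ whenever s₂ ≤ s₁ ≤ (1+γ)s₂ and s₁, s₂ ∈ (0,R], and let φ : [−R², R²] → ℝ be L-Lipschitz. For x ∈ ℝᵈ with ‖x‖ ∈ [rᵢ, (1+γ)rᵢ) define x̃ := (x/‖x‖)·rᵢ (norm truncation to the annulus boundary), similarly ỹ for ‖y‖ ∈ [rⱼ, (1+γ)rⱼ). Define w(x,y) := p₀(‖x‖)·exp(φ(⟨x,y⟩)). Then for all such x, y with ‖x‖, ‖y‖ ∈ [r₀, R], exp(−(q + HR + 3L·rᵢ·rⱼ)·γ) ≤ w(x̃, ỹ)/w(x,y) ≤ exp((q + HR + 3L·rᵢ·rⱼ)·γ). -/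
/-!
The ratio is `exp (log (p₀ rᵢ / p₀ ‖x‖) + (φ ⟨x̃, ỹ⟩ - φ ⟨x, y⟩))`. The first summand is
controlled by the log-Lipschitz hypothesis on `p₀`, since `‖x̃‖ = rᵢ ≤ ‖x‖ < (1 + γ) rᵢ`. For the
second, `⟨x̃, ỹ⟩ = (rᵢ rⱼ / (‖x‖ ‖y‖)) ⟨x, y⟩`, so by Cauchy–Schwarz the two inner products differ
by at most `‖x‖ ‖y‖ - rᵢ rⱼ ≤ ((1 + γ)² - 1) rᵢ rⱼ ≤ 3 rᵢ rⱼ γ`, and both lie in `[-R², R²]`,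
where `φ` is `L`-Lipschitz.
-/

open Set

theorem abs_mul_sub_mul_le_three_mul {a b s t γ : ℝ} (ha : 0 ≤ a) (hb : 0 ≤ b)
    (hγ : 0 ≤ γ) (hγ1 : γ ≤ 1) (hs : s ∈ Icc a ((1 + γ) * a)) (ht : t ∈ Icc b ((1 + γ) * b)) :
    |s * t - a * b| ≤ 3 * a * b * γ := by
  have hlow : a * b ≤ s * t := mul_le_mul hs.1 ht.1 hb (ha.trans hs.1)
  have hhigh : s * t ≤ (1 + γ) * a * ((1 + γ) * b) := mul_le_mul hs.2 ht.2 (hb.trans ht.1) (by positivity)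
  rw [abs_of_nonneg (sub_nonneg.2 hlow)]
  nlinarith [mul_nonneg (mul_nonneg ha hb) (mul_nonneg hγ (sub_nonneg.2 hγ1))]

theorem Real.exp_neg_le_and_le_exp_of_abs_log_le {z c : ℝ} (hz : 0 < z)
    (h : |Real.log z| ≤ c) : Real.exp (-c) ≤ z ∧ z ≤ Real.exp c := by
  rw [← Real.exp_log hz, Real.exp_le_exp, Real.exp_le_exp]
  exact abs_le.mp h

theorem Real.log_mul_exp_div_mul_exp {a b : ℝ} (ha : 0 < a) (hb : 0 < b) (u v : ℝ) :
    Real.log (a * Real.exp u / (b * Real.exp v)) = Real.log (a / b) + (u - v) := by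
  rw [mul_div_mul_comm, ← Real.exp_sub, Real.log_mul (div_pos ha hb).ne' (Real.exp_pos _).ne',
    Real.log_exp]

section InnerProductSpace

variable {E : Type*} [NormedAddCommGroup E] [InnerProductSpace ℝ E]

theorem norm_div_norm_smul {x : E} (hx : x ≠ 0) {r : ℝ} (hr : 0 ≤ r) :
    ‖(r / ‖x‖) • x‖ = r :=
  norm_smul_inv_norm' (𝕜 := ℝ) hr hx

theorem abs_real_inner_le_sq_of_norm_le {x y : E} {R : ℝ} (hx : ‖x‖ ≤ R) (hy : ‖y‖ ≤ R) :
    |(inner ℝ x y : ℝ)| ≤ R ^ 2 :=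
  (abs_real_inner_le_norm x y).trans
    (sq R ▸ mul_le_mul hx hy (norm_nonneg y) ((norm_nonneg x).trans hx))

theorem abs_real_inner_div_norm_smul_sub_le {x y : E} (hx : x ≠ 0) (hy : y ≠ 0) (a b : ℝ) :
    |(inner ℝ ((a / ‖x‖) • x) ((b / ‖y‖) • y) : ℝ) - inner ℝ x y| ≤ |a * b - ‖x‖ * ‖y‖| := by
  have hnx : ‖x‖ ≠ 0 := norm_ne_zero_iff.2 hx
  have hny : ‖y‖ ≠ 0 := norm_ne_zero_iff.2 hy
  have hsplit : (inner ℝ ((a / ‖x‖) • x) ((b / ‖y‖) • y) : ℝ) - inner ℝ x y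
      = (a * b - ‖x‖ * ‖y‖) * ((inner ℝ x y : ℝ) / (‖x‖ * ‖y‖)) := by
    rw [real_inner_smul_left, real_inner_smul_right]
    field_simp
  rw [hsplit, abs_mul]
  exact mul_le_of_le_one_right (abs_nonneg _) (abs_real_inner_div_norm_mul_norm_le_one x y)

end InnerProductSpace

theorem annuli_projection_ratio_general
    (d : ℕ) (γ q H L R r₀ ri rj : ℝ)
    (hγ : 0 < γ) (hγ1 : γ ≤ 1) (hL : 0 < L)
    (hri : 0 < ri) (hrj : 0 < rj)
    (p₀ : ℝ → ℝ) (hp₀pos : ∀ s, 0 < s → 0 < p₀ s)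
    (hp₀ : ∀ s₁ s₂, 0 < s₂ → s₂ ≤ s₁ → s₁ ≤ (1 + γ) * s₂ → s₁ ≤ R →
      |Real.log (p₀ s₁ / p₀ s₂)| ≤ q * γ + H * R * γ)
    (φ : ℝ → ℝ)
    (hφ : ∀ u ∈ Icc (-(R ^ 2)) (R ^ 2), ∀ v ∈ Icc (-(R ^ 2)) (R ^ 2),
      |φ u - φ v| ≤ L * |u - v|)
    (x y : EuclideanSpace ℝ (Fin d))
    (hx : ‖x‖ ∈ Ico ri ((1 + γ) * ri)) (hy : ‖y‖ ∈ Ico rj ((1 + γ) * rj))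
    (hxR : ‖x‖ ∈ Icc r₀ R) (hyR : ‖y‖ ∈ Icc r₀ R) :
    Real.exp (-((q + H * R + 3 * L * ri * rj) * γ))
        ≤ (p₀ ‖(ri / ‖x‖) • x‖
              * Real.exp (φ (inner ℝ ((ri / ‖x‖) • x) ((rj / ‖y‖) • y) : ℝ)))
            / (p₀ ‖x‖ * Real.exp (φ (inner ℝ x y : ℝ))) ∧
    (p₀ ‖(ri / ‖x‖) • x‖
        * Real.exp (φ (inner ℝ ((ri / ‖x‖) • x) ((rj / ‖y‖) • y) : ℝ)))
        / (p₀ ‖x‖ * Real.exp (φ (inner ℝ x y : ℝ)))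
      ≤ Real.exp ((q + H * R + 3 * L * ri * rj) * γ) := by
  have hx0 : x ≠ 0 := norm_pos_iff.1 (hri.trans_le hx.1)
  have hy0 : y ≠ 0 := norm_pos_iff.1 (hrj.trans_le hy.1)
  have hpri := hp₀pos ri hri
  have hpx := hp₀pos ‖x‖ (hri.trans_le hx.1)
  have hlog : |Real.log (p₀ ri / p₀ ‖x‖)| ≤ q * γ + H * R * γ := by
    rw [← inv_div, Real.log_inv, abs_neg]
    exact hp₀ ‖x‖ ri hri hx.1 hx.2.le hxR.2
  have hinner : |(inner ℝ ((ri / ‖x‖) • x) ((rj / ‖y‖) • y) : ℝ) - inner ℝ x y|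
      ≤ 3 * ri * rj * γ := by
    refine (abs_real_inner_div_norm_smul_sub_le hx0 hy0 ri rj).trans ?_
    rw [abs_sub_comm]
    exact abs_mul_sub_mul_le_three_mul hri.le hrj.le hγ.le hγ1 (Ico_subset_Icc_self hx)
      (Ico_subset_Icc_self hy)
  have hφinner := hφ _ (abs_le.mp (abs_real_inner_le_sq_of_norm_le
      ((norm_div_norm_smul hx0 hri.le).trans_le (hx.1.trans hxR.2))
      ((norm_div_norm_smul hy0 hrj.le).trans_le (hy.1.trans hyR.2))))
    _ (abs_le.mp (abs_real_inner_le_sq_of_norm_le hxR.2 hyR.2))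
  rw [norm_div_norm_smul hx0 hri.le]
  refine Real.exp_neg_le_and_le_exp_of_abs_log_le (by positivity) ?_
  rw [Real.log_mul_exp_div_mul_exp hpri hpx]
  calc _ ≤ (q * γ + H * R * γ) + L * (3 * ri * rj * γ) :=
        (abs_add_le _ _).trans (add_le_add hlog (hφinner.trans (by gcongr)))
    _ = (q + H * R + 3 * L * ri * rj) * γ := by ring

/-- Projecting points onto the inner boundaries of their spherical annuli changes
`w(x,y) = p₀(‖x‖)·exp(φ(⟨x,y⟩))` by at most a factor `exp((q + HR + 3L rᵢ rⱼ)γ)`. -/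
theorem annuli_projection_ratio
    (d : ℕ) (γ q H L R r₀ ri rj : ℝ)
    (hγ : 0 < γ) (hγ1 : γ ≤ 1) (hq : 0 < q) (hH : 0 < H) (hL : 0 < L)
    (hR : 0 < R) (hr₀ : 0 < r₀) (hri : 0 < ri) (hrj : 0 < rj)
    (p₀ : ℝ → ℝ) (hp₀pos : ∀ s, 0 < s → 0 < p₀ s)
    (hp₀ : ∀ s₁ s₂, 0 < s₂ → s₂ ≤ s₁ → s₁ ≤ (1 + γ) * s₂ → s₁ ≤ R →
      |Real.log (p₀ s₁ / p₀ s₂)| ≤ q * γ + H * R * γ)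
    (φ : ℝ → ℝ)
    (hφ : ∀ u ∈ Icc (-(R ^ 2)) (R ^ 2), ∀ v ∈ Icc (-(R ^ 2)) (R ^ 2),
      |φ u - φ v| ≤ L * |u - v|)
    (x y : EuclideanSpace ℝ (Fin d))
    (hx : ‖x‖ ∈ Ico ri ((1 + γ) * ri)) (hy : ‖y‖ ∈ Ico rj ((1 + γ) * rj))
    (hxR : ‖x‖ ∈ Icc r₀ R) (hyR : ‖y‖ ∈ Icc r₀ R) :
    Real.exp (-((q + H * R + 3 * L * ri * rj) * γ))
        ≤ (p₀ ‖(ri / ‖x‖) • x‖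
              * Real.exp (φ (inner ℝ ((ri / ‖x‖) • x) ((rj / ‖y‖) • y) : ℝ)))
            / (p₀ ‖x‖ * Real.exp (φ (inner ℝ x y : ℝ))) ∧
    (p₀ ‖(ri / ‖x‖) • x‖
        * Real.exp (φ (inner ℝ ((ri / ‖x‖) • x) ((rj / ‖y‖) • y) : ℝ)))
        / (p₀ ‖x‖ * Real.exp (φ (inner ℝ x y : ℝ)))
      ≤ Real.exp ((q + H * R + 3 * L * ri * rj) * γ) :=
  annuli_projection_ratio_general d γ q H L R r₀ ri rj hγ hγ1 hL hri hrj p₀ hp₀pos hp₀ φ hφ x y hx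
    hy hxR hyR
end

section
/- Let w ∈ ℝⁿ be a positive vector, μ > 0, and define f*ᵢ := min{1, μ/wᵢ} for i ∈ [n]. Then for any matrix A ∈ ℝ^{n×n}: sup over f ∈ ℝⁿ₊ with Σᵢ wᵢfᵢ ≤ μ and Σᵢ fᵢ ≤ 1 of fᵀAf is at most 4·max_{i,j ∈ [n]} f*ᵢ·|A_{ij}|·f*ⱼ. -/
open Finset

/-- Variational bound on a quadratic form over the intersection of two weighted
`ℓ₁`-balls: `sup { fᵀAf } ≤ 4·max_{i,j} f*ᵢ |A_{ij}| f*ⱼ` with `f*ᵢ = min{1, μ/wᵢ}`. -/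
theorem quadratic_form_weighted_l1_bound
    (n : ℕ) (hn : 0 < n) (w : Fin n → ℝ) (hw : ∀ i, 0 < w i) (μ : ℝ) (hμ : 0 < μ)
    (A : Matrix (Fin n) (Fin n) ℝ) (f : Fin n → ℝ)
    (hf : ∀ i, 0 ≤ f i)
    (hfw : ∑ i, w i * f i ≤ μ) (hf1 : ∑ i, f i ≤ 1) :
    ∑ i, ∑ j, f i * A i j * f j
      ≤ 4 * ⨆ i, ⨆ j, min 1 (μ / w i) * |A i j| * min 1 (μ / w j) := by
  have hne : Nonempty (Fin n) := ⟨⟨0, hn⟩⟩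
  set g : Fin n → Fin n → ℝ :=
    fun i j => min 1 (μ / w i) * |A i j| * min 1 (μ / w j) with hgdef
  have hfs0 : ∀ i, (0:ℝ) < min 1 (μ / w i) :=
    fun i => lt_min one_pos (div_pos hμ (hw i))
  have hg0 : ∀ i j, 0 ≤ g i j := fun i j =>
    mul_nonneg (mul_nonneg (hfs0 i).le (abs_nonneg _)) (hfs0 j).le
  have hM : ∀ i j, g i j ≤ ⨆ i, ⨆ j, g i j := by
    intro i j
    have h1 : g i j ≤ ⨆ j, g i j :=
      le_ciSup (Set.Finite.bddAbove (Set.finite_range _)) j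
    exact h1.trans (le_ciSup (f := fun i => ⨆ j, g i j)
      (Set.Finite.bddAbove (Set.finite_range _)) i)
  set M := ⨆ i, ⨆ j, g i j with hMdef
  have hM0 : 0 ≤ M := (hg0 ⟨0, hn⟩ ⟨0, hn⟩).trans (hM _ _)
  set c : Fin n → ℝ := fun i => f i / min 1 (μ / w i) with hcdef
  have hc0 : ∀ i, 0 ≤ c i := fun i => div_nonneg (hf i) (hfs0 i).le
  have hcsum : ∑ i, c i ≤ 2 := by
    have h1 : ∀ i, c i ≤ f i + w i * f i / μ := by
      intro i
      rcases le_or_gt 1 (μ / w i) with h | h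
      · have he : min 1 (μ / w i) = 1 := min_eq_left h
        have h2 : 0 ≤ w i * f i / μ :=
          div_nonneg (mul_nonneg (hw i).le (hf i)) hμ.le
        simp only [hcdef, he, div_one]
        linarith
      · have he : min 1 (μ / w i) = μ / w i := min_eq_right h.le
        have h2 : c i = w i * f i / μ := by
          simp only [hcdef, he]
          field_simp
        rw [h2]
        linarith [hf i]
    calc ∑ i, c i ≤ ∑ i, (f i + w i * f i / μ) :=
          Finset.sum_le_sum fun i _ => h1 i
      _ = (∑ i, f i) + (∑ i, w i * f i) / μ := by
          rw [Finset.sum_add_distrib, Finset.sum_div]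
      _ ≤ 1 + μ / μ := by
          gcongr
      _ = 2 := by rw [div_self hμ.ne']; norm_num
  have hfi : ∀ i, f i = c i * min 1 (μ / w i) := fun i =>
    (div_mul_cancel₀ _ (hfs0 i).ne').symm
  calc ∑ i, ∑ j, f i * A i j * f j
      ≤ ∑ i, ∑ j, c i * c j * M := by
        refine Finset.sum_le_sum fun i _ => Finset.sum_le_sum fun j _ => ?_
        have h1 : f i * A i j * f j ≤ f i * |A i j| * f j := by
          have := le_abs_self (A i j)
          have := mul_le_mul_of_nonneg_left this (hf i)
          have := mul_le_mul_of_nonneg_right this (hf j)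
          linarith
        have h2 : f i * |A i j| * f j = c i * c j * g i j := by
          rw [hfi i, hfi j]; ring
        have h3 : c i * c j * g i j ≤ c i * c j * M :=
          mul_le_mul_of_nonneg_left (hM i j) (mul_nonneg (hc0 i) (hc0 j))
        linarith
    _ = (∑ i, c i) * (∑ j, c j) * M := by
        simp only [← Finset.sum_mul]
        rw [← Finset.sum_mul_sum]
    _ ≤ 4 * M := by
        have hs0 : 0 ≤ ∑ i, c i :=
          Finset.sum_nonneg fun i _ => hc0 i
        nlinarith [mul_nonneg (mul_nonneg (sub_nonneg.2 hcsum)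
          (by linarith : (0:ℝ) ≤ 2 + ∑ i, c i)) hM0]
end
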